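/- Let Λ be a countable finitely aligned category of paths and let μ, ν ∈ Λ with μ ≠ ν, s(μ) = s(ν), and r(μ) = r(ν). The following are equivalent: (a) μτ ⋔ ν for every τ ∈ s(μ)Λ (i.e., (μ,ν) is a generalized cycle); (b) the set {σ^μ(ε) : ε ∈ μ ∨ ν} is exhaustive in s(μ)Λ; (c) {μx : x ∈ s(μ)∂Λ} ⊆ {νx : x ∈ s(ν)∂Λ}, where s(μ)∂Λ = ∂Λ ∩ s(μ)Λ*. -/

import Mathlib

universe u v

/-- A category of paths: a small category (objects identified with identity
morphisms) with left and right cancellation and no inverses. -/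
structure CategoryOfPaths (Λ : Type u) where
  s : Λ → Λ
  r : Λ → Λ
  comp : Λ → Λ → Λ
  s_comp : ∀ {α β : Λ}, s α = r β → s (comp α β) = s β
  r_comp : ∀ {α β : Λ}, s α = r β → r (comp α β) = r α
  comp_assoc : ∀ {α β γ : Λ}, s α = r β → s β = r γ →
    comp (comp α β) γ = comp α (comp β γ)
  id_comp : ∀ α : Λ, comp (r α) α = α
  comp_id : ∀ α : Λ, comp α (s α) = α
  s_r : ∀ α : Λ, s (r α) = r α
  r_r : ∀ α : Λ, r (r α) = r α
  r_s : ∀ α : Λ, r (s α) = s α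
  s_s : ∀ α : Λ, s (s α) = s α
  left_cancel : ∀ {α β γ : Λ}, s α = r β → s α = r γ → comp α β = comp α γ → β = γ
  right_cancel : ∀ {β γ α : Λ}, s β = r α → s γ = r α → comp β α = comp γ α → β = γ
  no_inverses : ∀ {α β : Λ}, s α = r β → comp α β = s β → α = s β ∧ β = s β

variable {Λ : Type u}

/-- The tail set `αΛ`. -/
def pTail (C : CategoryOfPaths Λ) (α : Λ) : Set Λ :=
  {x | ∃ β, C.s α = C.r β ∧ x = C.comp α β}

/-- `vΛ`, the paths with range `v`. -/
def pRng (C : CategoryOfPaths Λ) (w : Λ) : Set Λ := {α | C.r α = w}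

/-- `Λv`, the paths with source `v`. -/
def pSrc (C : CategoryOfPaths Λ) (w : Λ) : Set Λ := {α | C.s α = w}

/-- `[β]`, the initial segments of `β`. -/
def pSeg (C : CategoryOfPaths Λ) (β : Λ) : Set Λ := {α | β ∈ pTail C α}

/-- `α ⋔ β`. -/
def pMeets (C : CategoryOfPaths Λ) (α β : Λ) : Prop :=
  (pTail C α ∩ pTail C β).Nonempty

/-- `αE`. -/
def pMulSet (C : CategoryOfPaths Λ) (α : Λ) (E : Set Λ) : Set Λ :=
  {x | ∃ β ∈ E, C.s α = C.r β ∧ x = C.comp α β}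

/-- `σ^α(E ∩ αΛ)`, computed inside an ambient subcategory `S`. -/
def pShiftIn (C : CategoryOfPaths Λ) (S : Set Λ) (α : Λ) (E : Set Λ) : Set Λ :=
  {β | β ∈ S ∧ C.s α = C.r β ∧ C.comp α β ∈ E}

/-- `σ^α(E ∩ αΛ)`. -/
def pShift (C : CategoryOfPaths Λ) (α : Λ) (E : Set Λ) : Set Λ :=
  {β | C.s α = C.r β ∧ C.comp α β ∈ E}

/-- `⋁F`: the minimal common extensions of `F`. -/
def pMinExt (C : CategoryOfPaths Λ) (F : Set Λ) : Set Λ :=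
  {ε | (∀ α ∈ F, ε ∈ pTail C α) ∧
    ∀ γ, (∀ α ∈ F, γ ∈ pTail C α) → ε ∈ pTail C γ → γ = ε}

/-- `α ∨ β`: the minimal common extensions of `α` and `β`. -/
def pMinCE (C : CategoryOfPaths Λ) (α β : Λ) : Set Λ := pMinExt C {α, β}

/-- A subcategory of a category of paths, as a set of morphisms. -/
structure IsSubcategory (C : CategoryOfPaths Λ) (Λ₀ : Set Λ) : Prop where
  comp_mem : ∀ {α β : Λ}, α ∈ Λ₀ → β ∈ Λ₀ → C.s α = C.r β → C.comp α β ∈ Λ₀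
  s_mem : ∀ {α : Λ}, α ∈ Λ₀ → C.s α ∈ Λ₀
  r_mem : ∀ {α : Λ}, α ∈ Λ₀ → C.r α ∈ Λ₀

/-- A finitely aligned category of paths. -/
def FinitelyAligned (C : CategoryOfPaths Λ) : Prop :=
  ∀ α β : Λ, ∃ G : Set Λ, G.Finite ∧
    pTail C α ∩ pTail C β = ⋃ ε ∈ G, pTail C ε

/-- A finitely aligned relative category of paths `(Λ₀, Λ)`. -/
def RelFinitelyAligned (C : CategoryOfPaths Λ) (Λ₀ : Set Λ) : Prop :=
  (∀ α ∈ Λ₀, ∀ β ∈ Λ₀, ∃ G : Set Λ, G.Finite ∧ G ⊆ Λ₀ ∧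
      pTail C α ∩ pTail C β = ⋃ ε ∈ G, pTail C ε) ∧
  (∀ α ∈ Λ₀, pTail C α ∩ Λ₀ = pMulSet C α Λ₀)

/-- A ring of sets: contains `∅` and is closed under `∪`, `∩`, and `\`. -/
def IsSetRing {γ : Type v} (R : Set (Set γ)) : Prop :=
  ∅ ∈ R ∧ (∀ E ∈ R, ∀ F ∈ R, E ∪ F ∈ R) ∧ (∀ E ∈ R, ∀ F ∈ R, E ∩ F ∈ R) ∧
    (∀ E ∈ R, ∀ F ∈ R, E \ F ∈ R)

/-- A ring of sets on `S`: a ring of sets all of whose members are subsets of `S`. -/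
def IsSetRingOn {γ : Type v} (S : Set γ) (R : Set (Set γ)) : Prop :=
  IsSetRing R ∧ ∀ E ∈ R, E ⊆ S

/-- The ring of sets generated by a collection. -/
def setRingGen {γ : Type v} (G : Set (Set γ)) : Set (Set γ) :=
  ⋂₀ {R | IsSetRing R ∧ G ⊆ R}

/-- The ring of sets on `S` generated by a collection. -/
def setRingGenOn {γ : Type v} (S : Set γ) (G : Set (Set γ)) : Set (Set γ) :=
  ⋂₀ {R | IsSetRingOn S R ∧ G ⊆ R}

/-- A zigzag: a list of pairs `(αᵢ, βᵢ)` with `r αᵢ = r βᵢ` and `s αᵢ₊₁ = s βᵢ`. -/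
def IsZigzag (C : CategoryOfPaths Λ) (l : List (Λ × Λ)) : Prop :=
  (∀ p ∈ l, C.r p.1 = C.r p.2) ∧ l.Chain' (fun p q => C.s q.1 = C.s p.2)

/-- The (graph of the) zigzag map `φ_ζ = σ^{α₁} β₁ ⋯ σ^{αₙ} βₙ`, computed
inside an ambient subcategory `S`. -/
def zigzagRelIn (C : CategoryOfPaths Λ) (S : Set Λ) : List (Λ × Λ) → Λ → Λ → Prop
  | [], x, y => x = y ∧ x ∈ S
  | p :: rest, x, y => ∃ z, zigzagRelIn C S rest x z ∧ C.s p.2 = C.r z ∧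
      C.s p.1 = C.r y ∧ y ∈ S ∧ C.comp p.2 z = C.comp p.1 y

/-- `A(ζ)`: the domain of the zigzag map. -/
def zigzagDomIn (C : CategoryOfPaths Λ) (S : Set Λ) (l : List (Λ × Λ)) : Set Λ :=
  {x | ∃ y, zigzagRelIn C S l x y}

/-- `𝒟(Λ₀,Λ)⁰_v`: nonempty zigzag sets with entries in `Λ₀` and source `v`,
computed inside the ambient subcategory `S`. -/
def relD0 (C : CategoryOfPaths Λ) (Λ₀ S : Set Λ) (w : Λ) : Set (Set Λ) :=
  {E | E.Nonempty ∧ ∃ (l : List (Λ × Λ)) (h : l ≠ []),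
    IsZigzag C l ∧ (∀ p ∈ l, p.1 ∈ Λ₀ ∧ p.2 ∈ Λ₀) ∧
    C.s (l.getLast h).2 = w ∧ E = zigzagDomIn C S l}

/-- `𝒜(Λ₀,Λ)_v`: the ring of sets generated by the zigzag sets. -/
def relAring (C : CategoryOfPaths Λ) (Λ₀ S : Set Λ) (w : Λ) : Set (Set Λ) :=
  setRingGenOn {α | α ∈ S ∧ C.r α = w} (relD0 C Λ₀ S w)

/-- A filter in a ring of sets. -/
def IsFilterIn {γ : Type v} (R U : Set (Set γ)) : Prop :=
  U.Nonempty ∧ U ⊆ R ∧ (∀ E ∈ U, E.Nonempty) ∧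
    (∀ E ∈ U, ∀ F ∈ U, E ∩ F ∈ U) ∧ (∀ E ∈ U, ∀ F ∈ R, E ⊆ F → F ∈ U)

/-- An ultrafilter in a ring of sets: a maximal filter. -/
def IsUltrafilterIn {γ : Type v} (R U : Set (Set γ)) : Prop :=
  IsFilterIn R U ∧ ∀ V, IsFilterIn R V → U ⊆ V → V = U

/-- A filter base in a ring of sets. -/
def IsFilterBaseIn {γ : Type v} (R B : Set (Set γ)) : Prop :=
  B.Nonempty ∧ B ⊆ R ∧ (∀ E ∈ B, E.Nonempty) ∧
    ∀ E ∈ B, ∀ F ∈ B, ∃ G ∈ B, G ⊆ E ∩ F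

/-- The filter generated by a filter base. -/
def filterGenBy {γ : Type v} (R B : Set (Set γ)) : Set (Set γ) :=
  {E | E ∈ R ∧ ∃ F ∈ B, F ⊆ E}

/-- An ultrafilter base in a ring of sets. -/
def IsUltrafilterBaseIn {γ : Type v} (R B : Set (Set γ)) : Prop :=
  IsFilterBaseIn R B ∧ IsUltrafilterIn R (filterGenBy R B)

/-- A Boolean ring homomorphism defined on a ring of sets `A` with values in a
generalized Boolean algebra. -/
def IsBRHomOn {γ : Type v} {R : Type*} [GeneralizedBooleanAlgebra R]
    (A : Set (Set γ)) (ν : Set γ → R) : Prop :=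
  ν ∅ = ⊥ ∧ (∀ E ∈ A, ∀ F ∈ A, ν (E ∪ F) = ν E ⊔ ν F) ∧
    (∀ E ∈ A, ∀ F ∈ A, ν (E ∩ F) = ν E ⊓ ν F) ∧
    (∀ E ∈ A, ∀ F ∈ A, ν (E \ F) = ν E \ ν F)

/-- `𝒜_v`: the ring of sets on `vΛ` generated by the tail sets. -/
def tailRing (C : CategoryOfPaths Λ) (w : Λ) : Set (Set Λ) :=
  setRingGenOn (pRng C w) {E | ∃ α, C.r α = w ∧ E = pTail C α}

/-- A directed subset. -/
def pDirected (C : CategoryOfPaths Λ) (x : Set Λ) : Prop :=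
  ∀ α ∈ x, ∀ β ∈ x, (pTail C α ∩ pTail C β ∩ x).Nonempty

/-- A hereditary subset. -/
def pHereditary (C : CategoryOfPaths Λ) (x : Set Λ) : Prop :=
  ∀ γ ∈ x, ∀ α : Λ, γ ∈ pTail C α → α ∈ x

/-- `vΛ*`: the nonempty directed hereditary subsets of `vΛ`. -/
def lamStar (C : CategoryOfPaths Λ) (w : Λ) : Set (Set Λ) :=
  {x | x.Nonempty ∧ x ⊆ pRng C w ∧ pDirected C x ∧ pHereditary C x}

/-- `vΛ**`: the maximal directed subsets of `vΛ`. -/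
def lamStarStar (C : CategoryOfPaths Λ) (w : Λ) : Set (Set Λ) :=
  {x | x ⊆ pRng C w ∧ pDirected C x ∧
    ∀ y, y ⊆ pRng C w → pDirected C y → x ⊆ y → y = x}

/-- `αx = ⋃_{γ ∈ x} [αγ]` for `x ∈ s(α)Λ*`. -/
def pMulStar (C : CategoryOfPaths Λ) (α : Λ) (x : Set Λ) : Set Λ :=
  {δ | ∃ γ ∈ x, C.s α = C.r γ ∧ C.comp α γ ∈ pTail C δ}

/-- `𝒰_{C,0}`. -/
def UC0 (C : CategoryOfPaths Λ) (w : Λ) (x : Set Λ) : Set (Set Λ) :=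
  {E | E ∈ tailRing C w ∧ ∃ α ∈ x, pTail C α ⊆ E}

/-- `𝒰_C`. -/
def UC (C : CategoryOfPaths Λ) (w : Λ) (x : Set Λ) : Set (Set Λ) :=
  {E | E ∈ tailRing C w ∧ ∃ α ∈ x, x ∩ pTail C α ⊆ E}

/-- `X_v = vΛ*` as a type. -/
abbrev Xv (C : CategoryOfPaths Λ) (w : Λ) : Type u := {x : Set Λ // x ∈ lamStar C w}

/-- The topology on `X_v` generated by the sets `Ê`, `E ∈ 𝒜_v`. -/
def XvTop (C : CategoryOfPaths Λ) (w : Λ) : TopologicalSpace (Xv C w) :=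
  TopologicalSpace.generateFrom
    {t | ∃ E ∈ tailRing C w, t = {x : Xv C w | E ∈ UC C w x.1}}

/-- The vertices of `Λ`. -/
abbrev Vertex (C : CategoryOfPaths Λ) : Type u := {w : Λ // C.r w = w}

/-- `X`: the disjoint union of the spaces `X_v`. -/
abbrev Xtotal (C : CategoryOfPaths Λ) : Type u := Σ w : Vertex C, Xv C w.1

/-- The disjoint union topology on `X`. -/
def XtotalTop (C : CategoryOfPaths Λ) : TopologicalSpace (Xtotal C) :=
  letI : ∀ w : Vertex C, TopologicalSpace (Xv C w.1) := fun w => XvTop C w.1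
  inferInstance

/-- The boundary `∂Λ`: the closure of `Λ**` in `X`. -/
def boundarySet (C : CategoryOfPaths Λ) : Set (Xtotal C) :=
  @closure _ (XtotalTop C) {p : Xtotal C | p.2.1 ∈ lamStarStar C p.1.1}

/-- An exhaustive subset of `vΛ`. -/
def ExhaustiveAt (C : CategoryOfPaths Λ) (w : Λ) (F : Set Λ) : Prop :=
  ∀ α, C.r α = w → ∃ β ∈ F, pMeets C α β

/-- An aperiodic point of `Λ*`. -/
def pAperiodic (C : CategoryOfPaths Λ) (x : Set Λ) : Prop :=
  ∀ α ∈ x, ∀ β ∈ x, α ≠ β → pShift C α x ≠ pShift C β x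

/-- A right-aperiodic point of `wΛ*`. -/
def pRightAperiodicAt (C : CategoryOfPaths Λ) (w : Λ) (x : Set Λ) : Prop :=
  ∀ α β : Λ, C.s α = w → C.s β = w → α ≠ β → pMulStar C α x ≠ pMulStar C β x

/-- The triples `(α, β, x)` with `s α = s β` and `x ∈ s(α)Λ*`. -/
abbrev pTrip (C : CategoryOfPaths Λ) : Type u :=
  {t : Λ × Λ × Set Λ // C.s t.1 = C.s t.2.1 ∧ t.2.2 ∈ lamStar C (C.s t.1)}

/-- The groupoid equivalence relation on triples. -/
def tripRel (C : CategoryOfPaths Λ) (t t' : pTrip C) : Prop :=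
  ∃ (z : Set Λ) (δ δ' : Λ),
    z ∈ lamStar C (C.s δ) ∧ z ∈ lamStar C (C.s δ') ∧
    C.s t.1.1 = C.r δ ∧ C.s t'.1.1 = C.r δ' ∧
    t.1.2.2 = pMulStar C δ z ∧ t'.1.2.2 = pMulStar C δ' z ∧
    C.comp t.1.1 δ = C.comp t'.1.1 δ' ∧
    C.comp t.1.2.1 δ = C.comp t'.1.2.1 δ'

/-- The ultrafilter space of `𝒜(Λ₀,Λ)_v`. -/
abbrev relXv (C : CategoryOfPaths Λ) (Λ₀ : Set Λ) (w : Λ) : Type u :=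
  {U : Set (Set Λ) // IsUltrafilterIn (relAring C Λ₀ Set.univ w) U}

/-- The topology on the ultrafilter space of `𝒜(Λ₀,Λ)_v` generated by the `Ê`. -/
def relXvTop (C : CategoryOfPaths Λ) (Λ₀ : Set Λ) (w : Λ) :
    TopologicalSpace (relXv C Λ₀ w) :=
  TopologicalSpace.generateFrom
    {t | ∃ E ∈ relAring C Λ₀ Set.univ w, t = {U : relXv C Λ₀ w | E ∈ U.1}}

/-!
(a) ⇔ (b) is left cancellation: a common extension of `μτ` and `ν` lies above a minimal common
extension `μβ` of `μ` and `ν`, and then `τ ⋔ β`.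

For the rest, the points of `∂Λ` are characterised as the `x ∈ Λ*` such that `αβ ∈ x` for some
`β ∈ F`, whenever `α ∈ x` and `F ⊆ s(α)Λ` is finite and exhaustive. Maximal directed sets have
this property: enumerate one along a cofinal sequence (countability) and enlarge it, by a König
argument over the finitely many minimal common extensions (finite alignment), to a directed set
containing a member of `F`, which by maximality is the set itself. The property then passes to
the closure, since it fails on the whole open set defined by `αΛ \ ⋃_{β ∈ F} αβΛ`. Conversely, every set of `𝒜_v` is constant near `x` on some
`αΛ \ ⋃_{β ∈ B} βΛ` containing `x ∩ αΛ`, and the property yields a whole tail `γΛ` inside it,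
so every neighbourhood of `x` contains a maximal directed set.

The property passes from `x` to `μx` and to `σ^ν(μx)`, which gives (b) ⇒ (c) once (b) puts `ν`
into `μx`. For (c) ⇒ (a), apply (c) to a maximal directed set through `τ`.
-/

theorem Set.Finite.exists_forall_of_antitone {ι : Type*} {S : Set ι} (hS : S.Finite)
    {P : ℕ → ι → Prop} (hP : ∀ i, Antitone fun n => P n i) (h : ∀ n, ∃ i ∈ S, P n i) :
    ∃ i ∈ S, ∀ n, P n i := by
  by_contra! hcon
  have hev : ∀ᶠ n in Filter.atTop, ∀ i ∈ S, ¬P n i := by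
    refine (Filter.eventually_all_finite hS).2 fun i hi => ?_
    obtain ⟨n, hn⟩ := hcon i hi
    exact Filter.eventually_atTop.2 ⟨n, fun k hk hPk => hn (hP i hk hPk)⟩
  obtain ⟨n, hn⟩ := hev.exists
  obtain ⟨i, hi, hPi⟩ := h n
  exact hn i hi hPi

section SetRings

variable {X : Type*} {S : Set X} {G : Set (Set X)} {E F : Set X}

theorem subset_setRingGenOn : G ⊆ setRingGenOn S G :=
  fun _ hE _ hR => hR.2 hE

theorem setRingGenOn_subset {R : Set (Set X)} (hR : IsSetRingOn S R) (hGR : G ⊆ R) :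
    setRingGenOn S G ⊆ R :=
  Set.sInter_subset_of_mem ⟨hR, hGR⟩

theorem union_mem_setRingGenOn (hE : E ∈ setRingGenOn S G) (hF : F ∈ setRingGenOn S G) :
    E ∪ F ∈ setRingGenOn S G :=
  fun R hR => hR.1.1.2.1 E (hE R hR) F (hF R hR)

theorem diff_mem_setRingGenOn (hE : E ∈ setRingGenOn S G) (hF : F ∈ setRingGenOn S G) :
    E \ F ∈ setRingGenOn S G :=
  fun R hR => hR.1.1.2.2.2 E (hE R hR) F (hF R hR)

theorem biUnion_mem_setRingGenOn {ι : Type*} {I : Set ι} (hI : I.Finite) {f : ι → Set X}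
    (hf : ∀ i ∈ I, f i ∈ setRingGenOn S G) : (⋃ i ∈ I, f i) ∈ setRingGenOn S G := by
  refine Set.Finite.induction_on_subset (motive := fun t _ => (⋃ i ∈ t, f i) ∈ setRingGenOn S G)
    I hI (fun R hR => by simpa using hR.1.1.1) fun ha _ _ ih => ?_
  rw [Set.biUnion_insert]
  exact union_mem_setRingGenOn (hf _ ha) ih

end SetRings

namespace CategoryOfPaths

variable {C : CategoryOfPaths Λ}

section Paths

theorem mem_pTail_self (C : CategoryOfPaths Λ) (α : Λ) : α ∈ pTail C α :=
  ⟨C.s α, (C.r_s α).symm, (C.comp_id α).symm⟩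

theorem comp_mem_pTail {α β : Λ} (h : C.s α = C.r β) : C.comp α β ∈ pTail C α :=
  ⟨β, h, rfl⟩

theorem r_eq_of_mem_pTail {α δ : Λ} (h : δ ∈ pTail C α) : C.r δ = C.r α := by
  obtain ⟨β, hβ, rfl⟩ := h
  exact C.r_comp hβ

theorem pTail_subset_of_mem {α δ : Λ} (h : δ ∈ pTail C α) : pTail C δ ⊆ pTail C α := by
  obtain ⟨β, hβ, rfl⟩ := h
  rintro _ ⟨γ, hγ, rfl⟩
  rw [C.s_comp hβ] at hγ
  exact ⟨C.comp β γ, by rw [C.r_comp hγ]; exact hβ, C.comp_assoc hβ hγ⟩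

theorem mem_pTail_trans {α δ ζ : Λ} (h : δ ∈ pTail C α) (h' : ζ ∈ pTail C δ) :
    ζ ∈ pTail C α :=
  pTail_subset_of_mem h h'

theorem pTail_subset_pRng {α : Λ} : pTail C α ⊆ pRng C (C.r α) :=
  fun _ hδ => r_eq_of_mem_pTail hδ

/-- This is where the absence of inverses is used. -/
theorem eq_of_mem_pTail_of_mem_pTail {α δ : Λ} (h : δ ∈ pTail C α) (h' : α ∈ pTail C δ) :
    α = δ := by
  obtain ⟨a, ha, rfl⟩ := h
  obtain ⟨b, hb, hab⟩ := h'
  rw [C.s_comp ha] at hb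
  have hcancel : C.comp a b = C.s α := by
    refine C.left_cancel (by rw [C.r_comp hb]; exact ha) (C.r_s α).symm ?_
    rw [← C.comp_assoc ha hb, ← hab, C.comp_id]
  have hsb : C.s b = C.s α := by rw [← C.s_comp hb, hcancel, C.s_s]
  obtain ⟨-, hb_id⟩ := C.no_inverses hb (by rw [hcancel, hsb])
  have hrb : C.r b = b := by rw [hb_id, C.r_s]
  have ha_id : a = C.s α := by
    calc a = C.comp a (C.s a) := (C.comp_id a).symm
      _ = C.s α := by rw [hb, hrb, hcancel]
  rw [ha_id, C.comp_id]

theorem comp_mem_pTail_comp_iff {α β γ : Λ} (hβ : C.s α = C.r β) (hγ : C.s α = C.r γ) :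
    C.comp α β ∈ pTail C (C.comp α γ) ↔ β ∈ pTail C γ := by
  constructor
  · rintro ⟨e, he, hEq⟩
    rw [C.s_comp hγ] at he
    rw [C.comp_assoc hγ he] at hEq
    exact ⟨e, he, C.left_cancel hβ (by rw [C.r_comp he]; exact hγ) hEq⟩
  · rintro ⟨e, he, rfl⟩
    exact ⟨e, by rw [C.s_comp hγ]; exact he, (C.comp_assoc hγ he).symm⟩

theorem pMeets_comp_iff {ρ ω η : Λ} (hω : C.s ρ = C.r ω) (hη : C.s ρ = C.r η) :
    pMeets C (C.comp ρ ω) (C.comp ρ η) ↔ pMeets C ω η := by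
  constructor
  · rintro ⟨ζ, ⟨θ, hθ, hζθ⟩, ⟨θ', hθ', hζθ'⟩⟩
    rw [C.s_comp hω] at hθ
    rw [C.s_comp hη] at hθ'
    rw [C.comp_assoc hω hθ] at hζθ
    rw [C.comp_assoc hη hθ'] at hζθ'
    have hcancel : C.comp ω θ = C.comp η θ' :=
      C.left_cancel (by rw [C.r_comp hθ]; exact hω) (by rw [C.r_comp hθ']; exact hη)
        (hζθ.symm.trans hζθ')
    exact ⟨C.comp ω θ, comp_mem_pTail hθ, hcancel ▸ comp_mem_pTail hθ'⟩
  · rintro ⟨ζ, hζω, hζη⟩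
    have hζ : C.s ρ = C.r ζ := by rw [r_eq_of_mem_pTail hζω]; exact hω
    exact ⟨C.comp ρ ζ, (comp_mem_pTail_comp_iff hζ hω).2 hζω,
      (comp_mem_pTail_comp_iff hζ hη).2 hζη⟩

theorem s_eq_of_r_eq_self {v : Λ} (hv : C.r v = v) : C.s v = v := by
  rw [← hv, C.s_r]

theorem pMeets_of_mem_pTail_right {α β γ : Λ} (h : pMeets C α β) (hβ : β ∈ pTail C γ) :
    pMeets C α γ :=
  let ⟨ζ, hζα, hζβ⟩ := h
  ⟨ζ, hζα, mem_pTail_trans hβ hζβ⟩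

theorem r_eq_of_pMeets {α β : Λ} (h : pMeets C α β) : C.r α = C.r β :=
  let ⟨_, hζα, hζβ⟩ := h
  (r_eq_of_mem_pTail hζα).symm.trans (r_eq_of_mem_pTail hζβ)

theorem pMeets_of_mem_pTail_left {α β γ : Λ} (h : pMeets C α β)
    (hα : α ∈ pTail C γ) : pMeets C γ β :=
  let ⟨ζ, hζα, hζβ⟩ := h
  ⟨ζ, mem_pTail_trans hα hζα, hζβ⟩

theorem pShift_finite (ρ : Λ) {E : Set Λ} (hE : E.Finite) : (pShift C ρ E).Finite := by
  refine Set.Finite.of_finite_image (f := C.comp ρ) (hE.subset ?_) ?_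
  · rintro _ ⟨β, hβ, rfl⟩
    exact hβ.2
  · intro β hβ β' hβ' h
    exact C.left_cancel hβ.1 hβ'.1 h

end Paths

section MinimalCommonExtensions

theorem pMinCE_finite (hfa : FinitelyAligned C) (α β : Λ) : (pMinCE C α β).Finite := by
  obtain ⟨G, hG, hGeq⟩ := hfa α β
  refine hG.subset fun ε ⟨hε, hmin⟩ => ?_
  have hεαβ : ε ∈ pTail C α ∩ pTail C β := ⟨hε α (by simp), hε β (by simp)⟩
  rw [hGeq, Set.mem_iUnion₂] at hεαβ
  obtain ⟨g, hg, hεg⟩ := hεαβ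
  have hgαβ : g ∈ pTail C α ∩ pTail C β := hGeq ▸ Set.mem_biUnion hg (mem_pTail_self C g)
  rwa [← hmin g (by simpa using hgαβ) hεg]

theorem exists_pMinCE_of_mem (hfa : FinitelyAligned C) {α β δ : Λ} (hα : δ ∈ pTail C α)
    (hβ : δ ∈ pTail C β) : ∃ ε ∈ pMinCE C α β, δ ∈ pTail C ε := by
  obtain ⟨G, hG, hGeq⟩ := hfa α β
  have hδ : δ ∈ ⋃ g ∈ G, pTail C g := hGeq ▸ ⟨hα, hβ⟩
  rw [Set.mem_iUnion₂] at hδ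
  obtain ⟨g₀, hg₀, hδg₀⟩ := hδ
  obtain ⟨ε, ⟨hεG, hδε⟩, hεmax⟩ := Set.Finite.exists_maximalFor (pTail C)
    {g ∈ G | δ ∈ pTail C g} (hG.subset (Set.sep_subset _ _)) ⟨g₀, hg₀, hδg₀⟩
  have hεαβ : ε ∈ pTail C α ∩ pTail C β := hGeq ▸ Set.mem_biUnion hεG (mem_pTail_self C ε)
  refine ⟨ε, ⟨fun a ha => ?_, fun γ hγ hεγ => ?_⟩, hδε⟩
  · rcases ha with rfl | rfl
    exacts [hεαβ.1, hεαβ.2]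
  · have hγαβ : γ ∈ ⋃ g ∈ G, pTail C g := hGeq ▸ ⟨hγ α (by simp), hγ β (by simp)⟩
    rw [Set.mem_iUnion₂] at hγαβ
    obtain ⟨g, hg, hγg⟩ := hγαβ
    have hεg : pTail C ε ⊆ pTail C g := pTail_subset_of_mem (mem_pTail_trans hγg hεγ)
    have hgε := hεmax ⟨hg, hεg hδε⟩ hεg
    exact eq_of_mem_pTail_of_mem_pTail hεγ (hgε hγg)

theorem exists_pMeets_pShift_pMinCE_iff (hfa : FinitelyAligned C) {ρ ω τ : Λ}
    (hω : C.s ρ = C.r ω) :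
    (∃ η ∈ pShift C ρ (pMinCE C ρ τ), pMeets C ω η) ↔ pMeets C (C.comp ρ ω) τ := by
  constructor
  · rintro ⟨η, ⟨hη, hρη⟩, hωη⟩
    exact pMeets_of_mem_pTail_right ((pMeets_comp_iff hω hη).2 hωη) (hρη.1 τ (by simp))
  · rintro ⟨ζ, hζω, hζτ⟩
    obtain ⟨ε, hε, hζε⟩ :=
      exists_pMinCE_of_mem hfa (mem_pTail_trans (comp_mem_pTail hω) hζω) hζτ
    obtain ⟨η, hη, rfl⟩ := hε.1 ρ (by simp)
    exact ⟨η, ⟨hη, hε⟩, (pMeets_comp_iff hω hη).1 ⟨ζ, hζω, hζε⟩⟩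

/-- `σ^ρ(ρ ∨ F)`. -/
def pShiftMinCE (C : CategoryOfPaths Λ) (ρ : Λ) (F : Set Λ) : Set Λ :=
  ⋃ τ ∈ F, pShift C ρ (pMinCE C ρ τ)

theorem pShiftMinCE_finite (hfa : FinitelyAligned C) (ρ : Λ) {F : Set Λ} (hF : F.Finite) :
    (pShiftMinCE C ρ F).Finite :=
  hF.biUnion fun τ _ => pShift_finite ρ (pMinCE_finite hfa ρ τ)

theorem s_eq_r_of_mem_pShiftMinCE {ρ η : Λ} {F : Set Λ} (hη : η ∈ pShiftMinCE C ρ F) :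
    C.s ρ = C.r η :=
  let ⟨_, _, hη⟩ := Set.mem_iUnion₂.1 hη
  hη.1

theorem exists_pMeets_pShiftMinCE_iff (hfa : FinitelyAligned C) {ρ ω : Λ} {F : Set Λ}
    (hω : C.s ρ = C.r ω) :
    (∃ η ∈ pShiftMinCE C ρ F, pMeets C ω η) ↔ ∃ τ ∈ F, pMeets C (C.comp ρ ω) τ := by
  simp only [pShiftMinCE, Set.mem_iUnion₂, ← exists_pMeets_pShift_pMinCE_iff hfa hω]
  grind

theorem exhaustiveAt_pShiftMinCE (hfa : FinitelyAligned C) {ρ : Λ} {F : Set Λ}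
    (hF : ExhaustiveAt C (C.r ρ) F) : ExhaustiveAt C (C.s ρ) (pShiftMinCE C ρ F) :=
  fun _ hω => (exists_pMeets_pShiftMinCE_iff hfa hω.symm).2 (hF _ (C.r_comp hω.symm))

end MinimalCommonExtensions

section DirectedSets

theorem mem_pTail_of_r_eq {v δ : Λ} (hv : C.r v = v) (hδ : C.r δ = v) : δ ∈ pTail C v :=
  ⟨δ, by rw [s_eq_of_r_eq_self hv, hδ], by rw [← hδ, C.id_comp]⟩

theorem pDirected_singleton (C : CategoryOfPaths Λ) (γ : Λ) : pDirected C {γ} := by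
  intro α hα β hβ
  rw [Set.mem_singleton_iff] at hα hβ
  subst hα hβ
  exact ⟨_, ⟨mem_pTail_self C _, mem_pTail_self C _⟩, rfl⟩

theorem mem_of_mem_lamStar {v : Λ} (hv : C.r v = v) {x : Set Λ} (hx : x ∈ lamStar C v) :
    v ∈ x :=
  let ⟨γ, hγ⟩ := hx.1
  hx.2.2.2 γ hγ v (mem_pTail_of_r_eq hv (hx.2.1 hγ))

theorem exists_common_ext_of_pDirected {x : Set Λ} (hx : pDirected C x) {α β : Λ}
    (hα : α ∈ x) (hβ : β ∈ x) : ∃ γ ∈ x, γ ∈ pTail C α ∧ γ ∈ pTail C β :=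
  let ⟨γ, ⟨hγα, hγβ⟩, hγ⟩ := hx α hα β hβ
  ⟨γ, hγ, hγα, hγβ⟩

theorem lamStarStar_eq_of_subset {v : Λ} {m y : Set Λ} (hm : m ∈ lamStarStar C v)
    (hy : y ⊆ pRng C v) (hyd : pDirected C y) (hmy : m ⊆ y) : y = m :=
  hm.2.2 y hy hyd hmy

theorem lamStarStar_nonempty {v : Λ} (hv : C.r v = v) {m : Set Λ}
    (hm : m ∈ lamStarStar C v) : m.Nonempty := by
  rw [Set.nonempty_iff_ne_empty]
  rintro rfl
  have h := lamStarStar_eq_of_subset hm (by simpa [pRng] using hv) (pDirected_singleton C v)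
    (Set.empty_subset _)
  simp at h

theorem lamStarStar_hereditary {v : Λ} {m : Set Λ} (hm : m ∈ lamStarStar C v) :
    pHereditary C m := by
  intro γ hγ α hγα
  have hdir : pDirected C (insert α m) := by
    have hext : ∀ β ∈ insert α m, ∃ δ ∈ m, δ ∈ pTail C β ∧ δ ∈ pTail C γ := by
      rintro β (rfl | hβ)
      · exact ⟨γ, hγ, hγα, mem_pTail_self C γ⟩
      · exact exists_common_ext_of_pDirected hm.2.1 hβ hγ
    intro β hβ β' hβ'
    obtain ⟨δ, hδ, hδβ, hδγ⟩ := hext β hβ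
    obtain ⟨δ', hδ', hδ'β', hδ'γ⟩ := hext β' hβ'
    obtain ⟨ε, hε, hεδ, hεδ'⟩ := exists_common_ext_of_pDirected hm.2.1 hδ hδ'
    exact ⟨ε, ⟨mem_pTail_trans hδβ hεδ, mem_pTail_trans hδ'β' hεδ'⟩, Or.inr hε⟩
  have hrng : insert α m ⊆ pRng C v := by
    rintro β (rfl | hβ)
    · exact (r_eq_of_mem_pTail hγα).symm.trans (hm.1 hγ)
    · exact hm.1 hβ
  rw [← lamStarStar_eq_of_subset hm hrng hdir (Set.subset_insert α m)]
  exact Set.mem_insert α m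

theorem lamStarStar_subset_lamStar {v : Λ} (hv : C.r v = v) :
    lamStarStar C v ⊆ lamStar C v :=
  fun _ hm => ⟨lamStarStar_nonempty hv hm, hm.1, hm.2.1, lamStarStar_hereditary hm⟩

theorem exists_lamStarStar_superset {v : Λ} {x : Set Λ} (hx : pDirected C x)
    (hxv : x ⊆ pRng C v) : ∃ m ∈ lamStarStar C v, x ⊆ m := by
  set P : Set (Set Λ) := {y | x ⊆ y ∧ y ⊆ pRng C v ∧ pDirected C y}
  have hchains : ∀ c ⊆ P, IsChain (· ⊆ ·) c → c.Nonempty → ∃ ub ∈ P, ∀ y ∈ c, y ⊆ ub := by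
    intro c hc hchain ⟨y₀, hy₀⟩
    refine ⟨⋃₀ c, ⟨(hc hy₀).1.trans (Set.subset_sUnion_of_mem hy₀),
      Set.sUnion_subset fun y hy => (hc hy).2.1, ?_⟩, fun _ => Set.subset_sUnion_of_mem⟩
    rintro α ⟨y, hy, hαy⟩ β ⟨y', hy', hβy'⟩
    obtain ⟨z, hz, hyz, hy'z⟩ := hchain.directedOn y hy y' hy'
    obtain ⟨γ, hγ, hγz⟩ := (hc hz).2.2 α (hyz hαy) β (hy'z hβy')
    exact ⟨γ, hγ, Set.subset_sUnion_of_mem hz hγz⟩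
  obtain ⟨m, hxm, ⟨-, hmv, hm⟩, hmax⟩ := zorn_subset_nonempty P hchains x ⟨le_rfl, hxv, hx⟩
  exact ⟨m, ⟨hmv, hm, fun y hyv hy hmy =>
    (hmax ⟨hxm.trans hmy, hyv, hy⟩ hmy).antisymm hmy⟩, hxm⟩

theorem exists_lamStarStar_mem {v γ : Λ} (hγ : C.r γ = v) :
    ∃ m ∈ lamStarStar C v, γ ∈ m :=
  let ⟨m, hm, hγm⟩ := exists_lamStarStar_superset (pDirected_singleton C γ)
    (Set.singleton_subset_iff.2 hγ)
  ⟨m, hm, hγm rfl⟩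

end DirectedSets

section ShiftAndProduct

theorem pShift_pDirected (ν : Λ) {z : Set Λ} (hz : pDirected C z) :
    pDirected C (pShift C ν z) := by
  rintro τ ⟨hτ, hντ⟩ τ' ⟨hτ', hντ'⟩
  obtain ⟨_, ⟨⟨e, he, rfl⟩, hτ'e⟩, hez⟩ := hz _ hντ _ hντ'
  rw [C.s_comp hτ] at he
  rw [C.comp_assoc hτ he] at hτ'e hez
  have hτe : C.s ν = C.r (C.comp τ e) := by rw [C.r_comp he]; exact hτ
  exact ⟨C.comp τ e, ⟨comp_mem_pTail he, (comp_mem_pTail_comp_iff hτe hτ').1 hτ'e⟩, hτe, hez⟩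

theorem pShift_mem_lamStar {ν : Λ} {z : Set Λ} (hz : z ∈ lamStar C (C.r ν)) (hν : ν ∈ z) :
    pShift C ν z ∈ lamStar C (C.s ν) := by
  obtain ⟨-, -, hdir, hher⟩ := hz
  refine ⟨?_, fun τ hτ => hτ.1.symm, pShift_pDirected ν hdir, ?_⟩
  · obtain ⟨_, ⟨⟨τ, hτ, rfl⟩, -⟩, hντ⟩ := hdir ν hν ν hν
    exact ⟨τ, hτ, hντ⟩
  · rintro τ ⟨hτ, hντ⟩ τ₀ hττ₀
    have hτ₀ : C.s ν = C.r τ₀ := by rw [← r_eq_of_mem_pTail hττ₀]; exact hτ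
    exact ⟨hτ₀, hher _ hντ _ ((comp_mem_pTail_comp_iff hτ hτ₀).2 hττ₀)⟩

theorem pMulStar_pDirected {α : Λ} {x : Set Λ} (hxv : x ⊆ pRng C (C.s α))
    (hx : pDirected C x) : pDirected C (pMulStar C α x) := by
  rintro δ ⟨γ, hγ, hαγ, hγδ⟩ δ' ⟨γ', hγ', hαγ', hγ'δ'⟩
  obtain ⟨γ'', ⟨hγγ'', hγ'γ''⟩, hγ''⟩ := hx γ hγ γ' hγ'
  have hαγ'' : C.s α = C.r γ'' := (hxv hγ'').symm
  refine ⟨C.comp α γ'', ⟨?_, ?_⟩, γ'', hγ'', hαγ'', mem_pTail_self C _⟩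
  · exact mem_pTail_trans hγδ ((comp_mem_pTail_comp_iff hαγ'' hαγ).2 hγγ'')
  · exact mem_pTail_trans hγ'δ' ((comp_mem_pTail_comp_iff hαγ'' hαγ').2 hγ'γ'')

theorem pMulStar_mem_lamStar {α : Λ} {x : Set Λ} (hx : x ∈ lamStar C (C.s α)) :
    pMulStar C α x ∈ lamStar C (C.r α) := by
  obtain ⟨⟨γ, hγ⟩, hxv, hdir, -⟩ := hx
  refine ⟨⟨α, γ, hγ, (hxv hγ).symm, comp_mem_pTail (hxv hγ).symm⟩, ?_,
    pMulStar_pDirected hxv hdir, ?_⟩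
  · rintro δ ⟨γ, -, hαγ, hγδ⟩
    exact (r_eq_of_mem_pTail hγδ).symm.trans (C.r_comp hαγ)
  · rintro δ ⟨γ, hγ, hαγ, hγδ⟩ δ' hδδ'
    exact ⟨γ, hγ, hαγ, mem_pTail_trans hδδ' hγδ⟩

theorem mem_pMulStar_self {α : Λ} {x : Set Λ} (hx : x ∈ lamStar C (C.s α)) :
    α ∈ pMulStar C α x :=
  let ⟨γ, hγ⟩ := hx.1
  ⟨γ, hγ, (hx.2.1 hγ).symm, comp_mem_pTail (hx.2.1 hγ).symm⟩

theorem pMulStar_pShift {ν : Λ} {z : Set Λ} (hz : pDirected C z) (hzh : pHereditary C z)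
    (hν : ν ∈ z) : pMulStar C ν (pShift C ν z) = z := by
  refine Set.Subset.antisymm (fun δ ⟨τ, ⟨_, hντ⟩, _, hτδ⟩ => hzh _ hντ _ hτδ) fun δ hδ => ?_
  obtain ⟨_, ⟨hδη, ⟨τ, hτ, rfl⟩⟩, hντ⟩ := hz δ hδ ν hν
  exact ⟨τ, ⟨hτ, hντ⟩, hτ, hδη⟩

theorem pMeets_comp_of_mem_pMulStar {μ ν τ : Λ} {x : Set Λ} (hxv : x ⊆ pRng C (C.s μ))
    (hx : pDirected C x) (hτ : τ ∈ x) (hν : ν ∈ pMulStar C μ x) : pMeets C (C.comp μ τ) ν := by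
  obtain ⟨γ, hγ, hμγ, hγν⟩ := hν
  obtain ⟨δ, hδ, hδτ, hδγ⟩ := exists_common_ext_of_pDirected hx hτ hγ
  have hμδ : C.s μ = C.r δ := (hxv hδ).symm
  exact ⟨C.comp μ δ, (comp_mem_pTail_comp_iff hμδ (hxv hτ).symm).2 hδτ,
    mem_pTail_trans hγν ((comp_mem_pTail_comp_iff hμδ hμγ).2 hδγ)⟩

theorem pShift_mem_lamStarStar {v γ : Λ} {m : Set Λ} (hm : m ∈ lamStarStar C v)
    (hγ : γ ∈ m) : pShift C γ m ∈ lamStarStar C (C.s γ) := by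
  refine ⟨fun τ hτ => hτ.1.symm, pShift_pDirected γ hm.2.1, fun y hyv hy hmy => ?_⟩
  have hγy : pMulStar C γ y = m := by
    refine lamStarStar_eq_of_subset hm ?_ (pMulStar_pDirected hyv hy) ?_
    · rintro δ ⟨ζ, -, hγζ, hζδ⟩
      exact (r_eq_of_mem_pTail hζδ).symm.trans ((C.r_comp hγζ).trans (hm.1 hγ))
    · calc m = pMulStar C γ (pShift C γ m) :=
            (pMulStar_pShift hm.2.1 (lamStarStar_hereditary hm) hγ).symm
        _ ⊆ pMulStar C γ y := fun δ ⟨ζ, hζ, h⟩ => ⟨ζ, hmy hζ, h⟩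
  refine Set.Subset.antisymm (fun ζ hζ => ⟨(hyv hζ).symm, ?_⟩) hmy
  exact hγy ▸ ⟨ζ, hζ, (hyv hζ).symm, mem_pTail_self C _⟩

end ShiftAndProduct

section MaximalDirectedSets

theorem mem_pTail_of_le {g : ℕ → Λ} (hg : ∀ n, g (n + 1) ∈ pTail C (g n)) {k n : ℕ}
    (hkn : k ≤ n) : g n ∈ pTail C (g k) := by
  induction n, hkn using Nat.le_induction with
  | base => exact mem_pTail_self C (g k)
  | succ n _ ih => exact mem_pTail_trans ih (hg n)

theorem exists_cofinal_seq [Countable Λ] {m : Set Λ} (hne : m.Nonempty)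
    (hm : pDirected C m) : ∃ g : ℕ → Λ, (∀ n, g n ∈ m) ∧ (∀ n, g (n + 1) ∈ pTail C (g n)) ∧
      ∀ α ∈ m, ∃ n, g n ∈ pTail C α := by
  have : Inhabited m := ⟨⟨hne.some, hne.some_mem⟩⟩
  have : Encodable m := Encodable.ofCountable m
  have hdir : Directed (fun α β => β ∈ pTail C α) (Subtype.val : m → Λ) := fun α β =>
    let ⟨γ, hγ, hγα, hγβ⟩ := exists_common_ext_of_pDirected hm α.2 β.2
    ⟨⟨γ, hγ⟩, hγα, hγβ⟩
  exact ⟨fun n => (hdir.sequence _ n).1, fun n => (hdir.sequence _ n).2,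
    hdir.sequence_mono_nat, fun α hα => ⟨_, hdir.rel_sequence ⟨α, hα⟩⟩⟩

theorem exists_ext_forall_pMeets (hfa : FinitelyAligned C) {g : ℕ → Λ}
    (hg : ∀ n, g (n + 1) ∈ pTail C (g n)) {ε : Λ} (hε : ∀ k, pMeets C (g k) ε) (n : ℕ) :
    ∃ ε' ∈ pTail C ε, ε' ∈ pTail C (g n) ∧ ∀ k, pMeets C (g k) ε' := by
  obtain ⟨ε', hε', hmeets⟩ := (pMinCE_finite hfa ε (g n)).exists_forall_of_antitone
    (P := fun k ε' => pMeets C (g k) ε')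
    (fun _ _ _ hkj h => pMeets_of_mem_pTail_left h (mem_pTail_of_le hg hkj))
    fun k => by
      obtain ⟨ζ, hζg, hζε⟩ := hε (max k n)
      obtain ⟨ε', hε', hζε'⟩ := exists_pMinCE_of_mem hfa hζε
        (mem_pTail_trans (mem_pTail_of_le hg (le_max_right k n)) hζg)
      exact ⟨ε', hε', ζ, mem_pTail_trans (mem_pTail_of_le hg (le_max_left k n)) hζg, hζε'⟩
  exact ⟨ε', hε'.1 ε (by simp), hε'.1 (g n) (by simp), hmeets⟩

theorem exists_mem_lamStarStar_of_exhaustiveAt [Countable Λ] (hfa : FinitelyAligned C)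
    {v : Λ} (hv : C.r v = v) {m : Set Λ} (hm : m ∈ lamStarStar C v) {F : Set Λ}
    (hF : F.Finite) (hex : ExhaustiveAt C v F) : ∃ β ∈ F, β ∈ m := by
  obtain ⟨g, hgm, hg, hcof⟩ := exists_cofinal_seq (lamStarStar_nonempty hv hm) hm.2.1
  obtain ⟨β, hβF, hβ⟩ := hF.exists_forall_of_antitone (P := fun n β => pMeets C (g n) β)
    (fun _ _ _ hkn h => pMeets_of_mem_pTail_left h (mem_pTail_of_le hg hkn))
    fun n => hex (g n) (hm.1 (hgm n))
  -- König's lemma: by finite alignment, the paths meeting every `g k` form a finitely branching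
  -- tree, which has a branch `e` through `β`, cofinal with `g`.
  choose next hnext using fun ε (hε : ∀ k, pMeets C (g k) ε) => exists_ext_forall_pMeets hfa hg hε
  let e : ℕ → {ε // ∀ k, pMeets C (g k) ε} := fun n =>
    Nat.rec (motive := fun _ => {ε // ∀ k, pMeets C (g k) ε}) ⟨β, hβ⟩
      (fun n ε => ⟨next ε.1 ε.2 n, (hnext ε.1 ε.2 n).2.2⟩) n
  have he : ∀ n, (e (n + 1)).1 ∈ pTail C (e n).1 := fun n => (hnext _ (e n).2 n).1
  have hy : {δ | ∃ n, (e n).1 ∈ pTail C δ} = m := by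
    refine lamStarStar_eq_of_subset hm ?_ ?_ ?_
    · rintro δ ⟨n, hn⟩
      exact (r_eq_of_mem_pTail hn).symm.trans
        ((r_eq_of_pMeets ((e n).2 0)).symm.trans (hm.1 (hgm 0)))
    · rintro δ ⟨n, hn⟩ δ' ⟨n', hn'⟩
      exact ⟨(e (max n n')).1, ⟨mem_pTail_trans hn (mem_pTail_of_le he (le_max_left n n')),
        mem_pTail_trans hn' (mem_pTail_of_le he (le_max_right n n'))⟩,
        max n n', mem_pTail_self C _⟩
    · intro α hα
      obtain ⟨n, hn⟩ := hcof α hα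
      exact ⟨n + 1, mem_pTail_trans hn (hnext _ (e n).2 n).2.1⟩
  exact ⟨β, hβF, hy ▸ ⟨0, mem_pTail_self C β⟩⟩

end MaximalDirectedSets

section FiniteExhaustive

def MeetsFinExhaustive (C : CategoryOfPaths Λ) (x : Set Λ) : Prop :=
  ∀ α ∈ x, ∀ F : Set Λ, F.Finite → (∀ β ∈ F, C.s α = C.r β) →
    ExhaustiveAt C (C.s α) F → ∃ β ∈ F, C.comp α β ∈ x

theorem MeetsFinExhaustive.exists_mem {v : Λ} (hv : C.r v = v) {x : Set Λ}
    (hx : x ∈ lamStar C v) (hxF : MeetsFinExhaustive C x) {F : Set Λ} (hF : F.Finite)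
    (hFv : F ⊆ pRng C v) (hex : ExhaustiveAt C v F) : ∃ β ∈ F, β ∈ x := by
  have hsv := s_eq_of_r_eq_self hv
  obtain ⟨β, hβ, hvβ⟩ := hxF v (mem_of_mem_lamStar hv hx) F hF
    (fun β hβ => hsv.trans (hFv hβ).symm) (by rwa [hsv])
  exact ⟨β, hβ, by rwa [← hFv hβ, C.id_comp] at hvβ⟩

theorem MeetsFinExhaustive.pShift {x : Set Λ} (hx : MeetsFinExhaustive C x) (ν : Λ) :
    MeetsFinExhaustive C (pShift C ν x) := by
  rintro α ⟨hνα, hναx⟩ F hF hαF hex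
  have hsα : C.s (C.comp ν α) = C.s α := C.s_comp hνα
  obtain ⟨β, hβF, hβx⟩ := hx _ hναx F hF (fun β hβ => hsα.trans (hαF β hβ)) (hsα ▸ hex)
  rw [C.comp_assoc hνα (hαF β hβF)] at hβx
  exact ⟨β, hβF, by rw [C.r_comp (hαF β hβF)]; exact hνα, hβx⟩

theorem MeetsFinExhaustive.pMulStar (hfa : FinitelyAligned C) {x : Set Λ}
    (hx : MeetsFinExhaustive C x) (μ : Λ) : MeetsFinExhaustive C (pMulStar C μ x) := by
  rintro α ⟨γ, hγx, hμγ, ρ, hαρ, hμγ_eq⟩ F hF hαF hex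
  have hsγ : C.s γ = C.s ρ := by rw [← C.s_comp hμγ, hμγ_eq, C.s_comp hαρ]
  obtain ⟨η, hηF', hγηx⟩ := hx γ hγx (pShiftMinCE C ρ F) (pShiftMinCE_finite hfa ρ hF)
    (fun _ hη => hsγ.trans (s_eq_r_of_mem_pShiftMinCE hη))
    (hsγ ▸ exhaustiveAt_pShiftMinCE hfa (hαρ ▸ hex))
  obtain ⟨τ, hτF, hρη, hρητ⟩ := Set.mem_iUnion₂.1 hηF'
  obtain ⟨κ, hτκ, hκ⟩ := hρητ.1 τ (by simp)
  have hγη : C.s γ = C.r η := hsγ.trans hρη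
  refine ⟨τ, hτF, C.comp γ η, hγηx, by rw [C.r_comp hγη]; exact hμγ, κ, ?_, ?_⟩
  · rw [C.s_comp (hαF τ hτF)]; exact hτκ
  · rw [← C.comp_assoc hμγ hγη, hμγ_eq, C.comp_assoc hαρ hρη, hκ,
      C.comp_assoc (hαF τ hτF) hτκ]

end FiniteExhaustive

section DecidedSets

def pCell (C : CategoryOfPaths Λ) (α : Λ) (B : Set Λ) : Set Λ :=
  pTail C α \ ⋃ β ∈ B, pTail C β

def IsDecidedNear (C : CategoryOfPaths Λ) (x E : Set Λ) : Prop :=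
  ∃ α ∈ x, ∃ B : Set Λ, B.Finite ∧ x ∩ pTail C α ⊆ pCell C α B ∧
    ∀ δ ∈ pCell C α B, ∀ δ' ∈ pCell C α B, (δ ∈ E ↔ δ' ∈ E)

theorem isDecidedNear_pTail {x : Set Λ} (hx : x.Nonempty) (hxh : pHereditary C x) (γ : Λ) :
    IsDecidedNear C x (pTail C γ) := by
  by_cases hγ : γ ∈ x
  · refine ⟨γ, hγ, ∅, Set.finite_empty, fun δ hδ => ⟨hδ.2, by simp⟩, fun δ hδ δ' hδ' => ?_⟩
    exact iff_of_true hδ.1 hδ'.1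
  · obtain ⟨α, hα⟩ := hx
    refine ⟨α, hα, {γ}, Set.finite_singleton γ, fun δ ⟨hδx, hδα⟩ => ⟨hδα, ?_⟩,
      fun δ hδ δ' hδ' => iff_of_false (fun h => hδ.2 (by simpa using h))
        (fun h => hδ'.2 (by simpa using h))⟩
    simpa using fun hδγ => hγ (hxh δ hδx γ hδγ)

theorem IsDecidedNear.of_iff {x E F G : Set Λ} (hx : pDirected C x) (hE : IsDecidedNear C x E)
    (hF : IsDecidedNear C x F) (op : Prop → Prop → Prop)
    (hG : ∀ δ, δ ∈ G ↔ op (δ ∈ E) (δ ∈ F)) : IsDecidedNear C x G := by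
  obtain ⟨α₁, hα₁, B₁, hB₁, hx₁, hE⟩ := hE
  obtain ⟨α₂, hα₂, B₂, hB₂, hx₂, hF⟩ := hF
  obtain ⟨α, hα, hαα₁, hαα₂⟩ := exists_common_ext_of_pDirected hx hα₁ hα₂
  have hcell : ∀ {α' B'}, α ∈ pTail C α' → B' ⊆ B₁ ∪ B₂ →
      pCell C α (B₁ ∪ B₂) ⊆ pCell C α' B' := fun hαα' hB' δ hδ =>
    ⟨mem_pTail_trans hαα' hδ.1, fun h => hδ.2 (Set.biUnion_subset_biUnion_left hB' h)⟩
  have hcell₁ := hcell hαα₁ Set.subset_union_left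
  have hcell₂ := hcell hαα₂ Set.subset_union_right
  refine ⟨α, hα, B₁ ∪ B₂, hB₁.union hB₂, fun δ ⟨hδx, hδα⟩ => ⟨hδα, ?_⟩,
    fun δ hδ δ' hδ' => ?_⟩
  · have h₁ := (hx₁ ⟨hδx, mem_pTail_trans hαα₁ hδα⟩).2
    have h₂ := (hx₂ ⟨hδx, mem_pTail_trans hαα₂ hδα⟩).2
    rw [Set.biUnion_union]
    exact fun h => h.elim h₁ h₂
  · rw [hG, hG, hE δ (hcell₁ hδ) δ' (hcell₁ hδ'), hF δ (hcell₂ hδ) δ' (hcell₂ hδ')]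

theorem tailRing_subset_isDecidedNear {v : Λ} {x : Set Λ} (hx : x ∈ lamStar C v) :
    tailRing C v ⊆ {E | IsDecidedNear C x E} := by
  obtain ⟨⟨α, hα⟩, -, hxd, hxh⟩ := hx
  refine (setRingGenOn_subset (R := {E | E ⊆ pRng C v ∧ IsDecidedNear C x E}) ⟨⟨?_, ?_, ?_, ?_⟩,
    fun E hE => hE.1⟩ ?_).trans fun E hE => hE.2
  · exact ⟨Set.empty_subset _, α, hα, ∅, Set.finite_empty, fun δ hδ => ⟨hδ.2, by simp⟩,
      fun δ _ δ' _ => iff_of_false id id⟩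
  · exact fun E hE F hF => ⟨Set.union_subset hE.1 hF.1, hE.2.of_iff hxd hF.2 Or fun _ => Iff.rfl⟩
  · exact fun E hE F hF => ⟨Set.inter_subset_left.trans hE.1,
      hE.2.of_iff hxd hF.2 And fun _ => Iff.rfl⟩
  · exact fun E hE F hF => ⟨Set.sdiff_subset.trans hE.1,
      hE.2.of_iff hxd hF.2 (fun p q => p ∧ ¬q) fun _ => Iff.rfl⟩
  · rintro E ⟨γ, rfl, rfl⟩
    exact ⟨pTail_subset_pRng, isDecidedNear_pTail ⟨α, hα⟩ hxh γ⟩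

theorem exists_pCell_subset_of_mem_UC {v : Λ} {x : Set Λ} (hx : x ∈ lamStar C v) {E : Set Λ}
    (hE : E ∈ UC C v x) :
    ∃ α ∈ x, ∃ B : Set Λ, B.Finite ∧ x ∩ pTail C α ⊆ pCell C α B ∧ pCell C α B ⊆ E := by
  obtain ⟨hEv, α₀, hα₀, hα₀E⟩ := hE
  obtain ⟨α, hα, B, hB, hxB, hconst⟩ := tailRing_subset_isDecidedNear hx hEv
  obtain ⟨γ, hγ, hγα₀, hγα⟩ := exists_common_ext_of_pDirected hx.2.2.1 hα₀ hα
  have hγB := hxB ⟨hγ, hγα⟩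
  exact ⟨α, hα, B, hB, hxB, fun δ hδ => (hconst γ hγB δ hδ).1 (hα₀E ⟨hγ, hγα₀⟩)⟩

theorem MeetsFinExhaustive.exists_pTail_subset_pCell (hfa : FinitelyAligned C) {x : Set Λ}
    (hxF : MeetsFinExhaustive C x) {α : Λ} (hα : α ∈ x) {B : Set Λ} (hB : B.Finite)
    (hxB : x ∩ pTail C α ⊆ pCell C α B) : ∃ γ, pTail C γ ⊆ pCell C α B := by
  by_cases hex : ExhaustiveAt C (C.s α) (pShiftMinCE C α B)
  · obtain ⟨η, hη, hαη⟩ := hxF α hα _ (pShiftMinCE_finite hfa α hB)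
      (fun _ => s_eq_r_of_mem_pShiftMinCE) hex
    obtain ⟨β, hβ, hαη', hαηβ⟩ := Set.mem_iUnion₂.1 hη
    exact ((hxB ⟨hαη, comp_mem_pTail hαη'⟩).2 (Set.mem_biUnion hβ (hαηβ.1 β (by simp)))).elim
  · simp only [ExhaustiveAt, not_forall, not_exists, not_and] at hex
    obtain ⟨τ, hτ, hτB⟩ := hex
    refine ⟨C.comp α τ, fun δ hδ => ⟨mem_pTail_trans (comp_mem_pTail hτ.symm) hδ, fun h => ?_⟩⟩
    obtain ⟨β, hβ, hδβ⟩ := Set.mem_iUnion₂.1 h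
    obtain ⟨η, hη, hτη⟩ := (exists_pMeets_pShiftMinCE_iff hfa (F := B) hτ.symm).2
      ⟨β, hβ, δ, hδ, hδβ⟩
    exact hτB η hη hτη

end DecidedSets

section Boundary

theorem mem_boundarySet_iff {v : Λ} (hv : C.r v = v) (p : Xv C v) :
    (⟨⟨v, hv⟩, p⟩ : Xtotal C) ∈ boundarySet C ↔
      p ∈ @closure _ (XvTop C v) {y | y.1 ∈ lamStarStar C v} := by
  let _ : ∀ w : Vertex C, TopologicalSpace (Xv C w.1) := fun w => XvTop C w.1
  change p ∈ (Sigma.mk (β := fun w : Vertex C => Xv C w.1) ⟨v, hv⟩) ⁻¹'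
    closure {q : Xtotal C | q.2.1 ∈ lamStarStar C q.1.1} ↔ _
  rw [isOpenMap_sigmaMk.preimage_closure_eq_closure_preimage continuous_sigmaMk]
  rfl

theorem mem_closure_iff_generateOpen {v : Λ} {p : Xv C v} {M : Set (Xv C v)} :
    p ∈ @closure _ (XvTop C v) M ↔ ∀ U, TopologicalSpace.GenerateOpen
      {t | ∃ E ∈ tailRing C v, t = {y : Xv C v | E ∈ UC C v y.1}} U → p ∈ U → (U ∩ M).Nonempty :=
  @mem_closure_iff _ (XvTop C v) _ _

theorem lamStarStar_mem_boundarySet {v : Λ} (hv : C.r v = v) {m : Set Λ}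
    (hm : m ∈ lamStarStar C v) :
    (⟨⟨v, hv⟩, ⟨m, lamStarStar_subset_lamStar hv hm⟩⟩ : Xtotal C) ∈ boundarySet C :=
  @subset_closure _ (XtotalTop C) _ _ hm

theorem pTail_mem_tailRing (α : Λ) : pTail C α ∈ tailRing C (C.r α) :=
  subset_setRingGenOn ⟨α, rfl, rfl⟩

theorem UC_subset_UC_of_subset {v : Λ} {x : Set Λ} {E F : Set Λ} (hE : E ∈ UC C v x)
    (hF : F ∈ tailRing C v) (hEF : E ⊆ F) : F ∈ UC C v x :=
  let ⟨_, α, hα, hαE⟩ := hE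
  ⟨hF, α, hα, hαE.trans hEF⟩

theorem MeetsFinExhaustive.of_mem_boundarySet [Countable Λ] (hfa : FinitelyAligned C)
    {v : Λ} (hv : C.r v = v) {x : Set Λ} (hx : x ∈ lamStar C v)
    (hb : (⟨⟨v, hv⟩, ⟨x, hx⟩⟩ : Xtotal C) ∈ boundarySet C) : MeetsFinExhaustive C x := by
  intro α hα F hF hαF hex
  by_contra! hcon
  have hαv : C.r α = v := hx.2.1 hα
  set E : Set Λ := pTail C α \ ⋃ β ∈ F, pTail C (C.comp α β)
  have hEv : E ∈ tailRing C v := by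
    refine diff_mem_setRingGenOn (hαv ▸ pTail_mem_tailRing α) (biUnion_mem_setRingGenOn hF
      fun β hβ => ?_)
    have hαβ := pTail_mem_tailRing (C := C) (C.comp α β)
    rwa [C.r_comp (hαF β hβ), hαv] at hαβ
  have hxE : E ∈ UC C v x := by
    refine ⟨hEv, α, hα, fun δ ⟨hδx, hδα⟩ => ⟨hδα, fun hδ => ?_⟩⟩
    obtain ⟨β, hβ, hδβ⟩ := Set.mem_iUnion₂.1 hδ
    exact hcon β hβ (hx.2.2.2 δ hδx _ hδβ)
  obtain ⟨⟨y, hyv⟩, hyE, hym⟩ := (mem_closure_iff_generateOpen.1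
    ((mem_boundarySet_iff hv _).1 hb)) _ (.basic _ ⟨E, hEv, rfl⟩) hxE
  obtain ⟨-, α', hα'y, hy⟩ := hyE
  have hα' : α' ∈ E := hy ⟨hα'y, mem_pTail_self C α'⟩
  have hαy : α ∈ y := lamStarStar_hereditary hym α' hα'y α hα'.1
  obtain ⟨β, hβF, hβy⟩ := exists_mem_lamStarStar_of_exhaustiveAt hfa (C.r_s α)
    (pShift_mem_lamStarStar hym hαy) hF hex
  obtain ⟨δ, hδy, hδα', hδβ⟩ := exists_common_ext_of_pDirected hym.2.1 hα'y hβy.2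
  exact (hy ⟨hδy, hδα'⟩).2 (Set.mem_biUnion hβF hδβ)

theorem inter_mem_UC {v : Λ} {x : Set Λ} (hx : pDirected C x) {E F : Set Λ}
    (hE : E ∈ UC C v x) (hF : F ∈ UC C v x) : E ∩ F ∈ UC C v x := by
  obtain ⟨hEv, α, hα, hαE⟩ := hE
  obtain ⟨hFv, β, hβ, hβF⟩ := hF
  obtain ⟨γ, hγ, hγα, hγβ⟩ := exists_common_ext_of_pDirected hx hα hβ
  exact ⟨fun R hR => hR.1.1.2.2.1 E (hEv R hR) F (hFv R hR), γ, hγ,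
    fun δ ⟨hδx, hδγ⟩ => ⟨hαE ⟨hδx, mem_pTail_trans hγα hδγ⟩, hβF ⟨hδx, mem_pTail_trans hγβ hδγ⟩⟩⟩

theorem exists_UC_subset_of_generateOpen {v : Λ} {x : Set Λ} (hx : x ∈ lamStar C v)
    {U : Set (Xv C v)} (hU : TopologicalSpace.GenerateOpen
      {t | ∃ E ∈ tailRing C v, t = {y : Xv C v | E ∈ UC C v y.1}} U) (hxU : ⟨x, hx⟩ ∈ U) :
    ∃ E ∈ UC C v x, {y : Xv C v | E ∈ UC C v y.1} ⊆ U := by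
  induction hU with
  | basic u hu =>
    obtain ⟨E, -, rfl⟩ := hu
    exact ⟨E, hxU, subset_rfl⟩
  | univ =>
    obtain ⟨α, hα⟩ := hx.1
    exact ⟨pTail C α, ⟨hx.2.1 hα ▸ pTail_mem_tailRing α, α, hα, Set.inter_subset_right⟩,
      Set.subset_univ _⟩
  | inter u w _ _ ihu ihw =>
    obtain ⟨E, hE, hEu⟩ := ihu hxU.1
    obtain ⟨F, hF, hFw⟩ := ihw hxU.2
    exact ⟨E ∩ F, inter_mem_UC hx.2.2.1 hE hF, fun y hy =>
      ⟨hEu (UC_subset_UC_of_subset hy hE.1 Set.inter_subset_left),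
        hFw (UC_subset_UC_of_subset hy hF.1 Set.inter_subset_right)⟩⟩
  | sUnion K _ ih =>
    obtain ⟨u, hu, hxu⟩ := hxU
    obtain ⟨E, hE, hEu⟩ := ih u hu hxu
    exact ⟨E, hE, hEu.trans (Set.subset_sUnion_of_mem hu)⟩

theorem MeetsFinExhaustive.mem_boundarySet (hfa : FinitelyAligned C) {v : Λ} (hv : C.r v = v)
    {x : Set Λ} (hx : x ∈ lamStar C v) (hxF : MeetsFinExhaustive C x) :
    (⟨⟨v, hv⟩, ⟨x, hx⟩⟩ : Xtotal C) ∈ boundarySet C := by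
  rw [mem_boundarySet_iff, mem_closure_iff_generateOpen]
  intro U hU hxU
  obtain ⟨E, hE, hEU⟩ := exists_UC_subset_of_generateOpen hx hU hxU
  obtain ⟨α, hα, B, hB, hxB, hBE⟩ := exists_pCell_subset_of_mem_UC hx hE
  obtain ⟨γ, hγ⟩ := hxF.exists_pTail_subset_pCell hfa hα hB hxB
  obtain ⟨m, hm, hγm⟩ := exists_lamStarStar_mem
    ((r_eq_of_mem_pTail (hγ (mem_pTail_self C γ)).1).trans (hx.2.1 hα))
  exact ⟨⟨m, lamStarStar_subset_lamStar hv hm⟩,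
    hEU ⟨hE.1, γ, hγm, fun δ hδ => hBE (hγ hδ.2)⟩, hm⟩

end Boundary

end CategoryOfPaths

open CategoryOfPaths

theorem statement18_general {Λ : Type u} [Countable Λ] (C : CategoryOfPaths Λ)
    (hfa : FinitelyAligned C) (μ ν : Λ)
    (hr : C.r μ = C.r ν) :
    ((∀ τ : Λ, C.s μ = C.r τ → pMeets C (C.comp μ τ) ν) ↔
      ExhaustiveAt C (C.s μ) (pShift C μ (pMinCE C μ ν))) ∧
    (ExhaustiveAt C (C.s μ) (pShift C μ (pMinCE C μ ν)) ↔
      {y : Set Λ | ∃ (x : Set Λ) (hx : x ∈ lamStar C (C.s μ)),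
          (Sigma.mk (⟨C.s μ, C.r_s μ⟩ : Vertex C) (⟨x, hx⟩ : Xv C (C.s μ)) : Xtotal C)
              ∈ boundarySet C ∧ y = pMulStar C μ x} ⊆
        {y : Set Λ | ∃ (x : Set Λ) (hx : x ∈ lamStar C (C.s ν)),
          (Sigma.mk (⟨C.s ν, C.r_s ν⟩ : Vertex C) (⟨x, hx⟩ : Xv C (C.s ν)) : Xtotal C)
              ∈ boundarySet C ∧ y = pMulStar C ν x}) := by
  have hab : (∀ τ : Λ, C.s μ = C.r τ → pMeets C (C.comp μ τ) ν) ↔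
      ExhaustiveAt C (C.s μ) (pShift C μ (pMinCE C μ ν)) :=
    ⟨fun ha τ hτ => (exists_pMeets_pShift_pMinCE_iff hfa hτ.symm).2 (ha τ hτ.symm),
      fun hb τ hτ => (exists_pMeets_pShift_pMinCE_iff hfa hτ).1 (hb τ hτ.symm)⟩
  refine ⟨hab, fun hb => ?_, fun hc => hab.1 fun τ hτ => ?_⟩
  · rintro _ ⟨x, hx, hxb, rfl⟩
    have hxF := MeetsFinExhaustive.of_mem_boundarySet hfa (C.r_s μ) hx hxb
    obtain ⟨β, hβ, hβx⟩ := hxF.exists_mem (C.r_s μ) hx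
      (pShift_finite μ (pMinCE_finite hfa μ ν)) (fun β hβ => hβ.1.symm) hb
    have hν : ν ∈ pMulStar C μ x := ⟨β, hβx, hβ.1, hβ.2.1 ν (by simp)⟩
    have hz : pMulStar C μ x ∈ lamStar C (C.r ν) := hr ▸ pMulStar_mem_lamStar hx
    exact ⟨_, pShift_mem_lamStar hz hν,
      ((hxF.pMulStar hfa μ).pShift ν).mem_boundarySet hfa (C.r_s ν) _,
      (pMulStar_pShift hz.2.2.1 hz.2.2.2 hν).symm⟩
  · obtain ⟨m, hm, hτm⟩ := exists_lamStarStar_mem hτ.symm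
    obtain ⟨y, hy, -, hmy⟩ := hc ⟨m, _, lamStarStar_mem_boundarySet (C.r_s μ) hm, rfl⟩
    exact pMeets_comp_of_mem_pMulStar hm.1 hm.2.1 hτm (hmy ▸ mem_pMulStar_self hy)

/-- Lemma 8.14. For `μ ≠ ν` with `s(μ) = s(ν)` and
`r(μ) = r(ν)`, the following are equivalent: (a) `(μ,ν)` is a generalized
cycle; (b) `σ^μ(μ ∨ ν)` is exhaustive; (c) `μ∂Λ ⊆ ν∂Λ`. -/
theorem statement18 {Λ : Type u} [Countable Λ] (C : CategoryOfPaths Λ)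
    (hfa : FinitelyAligned C) (μ ν : Λ) (hne : μ ≠ ν)
    (hs : C.s μ = C.s ν) (hr : C.r μ = C.r ν) :
    ((∀ τ : Λ, C.s μ = C.r τ → pMeets C (C.comp μ τ) ν) ↔
      ExhaustiveAt C (C.s μ) (pShift C μ (pMinCE C μ ν))) ∧
    (ExhaustiveAt C (C.s μ) (pShift C μ (pMinCE C μ ν)) ↔
      {y : Set Λ | ∃ (x : Set Λ) (hx : x ∈ lamStar C (C.s μ)),
          (Sigma.mk (⟨C.s μ, C.r_s μ⟩ : Vertex C) (⟨x, hx⟩ : Xv C (C.s μ)) : Xtotal C)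
              ∈ boundarySet C ∧ y = pMulStar C μ x} ⊆
        {y : Set Λ | ∃ (x : Set Λ) (hx : x ∈ lamStar C (C.s ν)),
          (Sigma.mk (⟨C.s ν, C.r_s ν⟩ : Vertex C) (⟨x, hx⟩ : Xv C (C.s ν)) : Xtotal C)
              ∈ boundarySet C ∧ y = pMulStar C ν x}) :=
  statement18_general C hfa μ ν hr
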